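/- Let δ₀ ∈ (0, δ₀*) where δ₀* = 2(η − α)/κ². Let {α_n} ⊆ (0, δ₀] with ∑ α_n = +∞ and with either (α_{n+1} − α_n)/α_n → 0 or ∑ |α_{n+1} − α_n| < +∞, and let {β_n} ⊆ [0,1] with limsup β_n < 1 and with either (β_{n+1} − β_n)/α_n → 0 or ∑ |β_{n+1} − β_n| < +∞. Let y_0 ∈ Q and define y_{n+1} = β_n y_n + (1 − β_n) P_Q(α_n f(y_n) + (T y_n − α_n F(T y_n))). Then ‖y_{n+1} − y_n‖ → 0. -/
import Mathlib


open scoped RealInnerProductSpace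
open Filter

private lemma xu_lemma (a γ δ ε : ℕ → ℝ) (ha : ∀ n, 0 ≤ a n)
    (hγ0 : ∀ n, 0 ≤ γ n) (hγ1 : ∀ n, γ n ≤ 1)
    (hsum : Tendsto (fun n => ∑ i ∈ Finset.range n, γ i) atTop atTop)
    (hδ : Tendsto δ atTop (nhds 0))
    (hε0 : ∀ n, 0 ≤ ε n) (hε : Summable ε)
    (hrec : ∀ᶠ n in atTop, a (n + 1) ≤ (1 - γ n) * a n + γ n * δ n + ε n) :
    Tendsto a atTop (nhds 0) := by
  rw [Metric.tendsto_atTop]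
  intro e he
  have h1 : ∀ᶠ n in atTop, δ n ≤ e/4 := (hδ.eventually_lt_const (by linarith)).mono fun n h => h.le
  have hps : Tendsto (fun n => ∑ i ∈ Finset.range n, ε i) atTop (nhds (∑' i, ε i)) :=
    hε.hasSum.tendsto_sum_nat
  have h2 : ∀ᶠ n in atTop, (∑' i, ε i) - e/4 < ∑ i ∈ Finset.range n, ε i :=
    hps.eventually_const_lt (by linarith)
  obtain ⟨N, hN⟩ := eventually_atTop.mp ((h1.and h2).and hrec)
  have hδN : ∀ n ≥ N, δ n ≤ e/4 := fun n hn => ((hN n hn).1).1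
  have hrecN : ∀ n ≥ N, a (n + 1) ≤ (1 - γ n) * a n + γ n * δ n + ε n := fun n hn => (hN n hn).2
  have htail : ∀ m, ∑ i ∈ Finset.Ico N m, ε i ≤ e/4 := by
    intro m
    rcases le_or_gt N m with h | h
    · rw [Finset.sum_Ico_eq_sub _ h]
      have hle : ∑ i ∈ Finset.range m, ε i ≤ ∑' i, ε i := Summable.sum_le_tsum _ (fun i _ => hε0 i) hε
      have := ((hN N le_rfl).1).2
      linarith
    · rw [Finset.Ico_eq_empty (by omega)]
      simp; linarith
  have hP0 : ∀ m, (0:ℝ) ≤ ∏ k ∈ Finset.Ico N m, (1 - γ k) :=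
    fun m => Finset.prod_nonneg fun k _ => by linarith [hγ1 k]
  have hP1 : ∀ m, ∏ k ∈ Finset.Ico N m, (1 - γ k) ≤ 1 :=
    fun m => Finset.prod_le_one (fun k _ => by linarith [hγ1 k]) (fun k _ => by linarith [hγ0 k])
  have key : ∀ m, N ≤ m → a m ≤ (∏ k ∈ Finset.Ico N m, (1 - γ k)) * a N
      + e/4 * (1 - ∏ k ∈ Finset.Ico N m, (1 - γ k)) + ∑ i ∈ Finset.Ico N m, ε i := by
    intro m hm
    induction m with
    | zero =>
      have hN0 : N = 0 := by omega
      subst hN0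
      simp
    | succ m ih =>
      rcases Nat.lt_or_ge m N with h | hNm
      · have hNe : N = m + 1 := by omega
        rw [← hNe]
        simp
      · have ihm := ih hNm
        have hrecm := hrecN m hNm
        have hδm := hδN m hNm
        rw [Finset.prod_Ico_succ_top hNm, Finset.sum_Ico_succ_top hNm]
        have hSig : (0:ℝ) ≤ ∑ i ∈ Finset.Ico N m, ε i := Finset.sum_nonneg fun i _ => hε0 i
        have e1 : (1 - γ m) * a m ≤ (1 - γ m) * ((∏ k ∈ Finset.Ico N m, (1 - γ k)) * a N
            + e/4 * (1 - ∏ k ∈ Finset.Ico N m, (1 - γ k)) + ∑ i ∈ Finset.Ico N m, ε i) :=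
          mul_le_mul_of_nonneg_left ihm (by linarith [hγ1 m])
        have e2 : γ m * δ m ≤ γ m * (e/4) := mul_le_mul_of_nonneg_left hδm (hγ0 m)
        have e3 : (0:ℝ) ≤ γ m * ∑ i ∈ Finset.Ico N m, ε i := mul_nonneg (hγ0 m) hSig
        nlinarith [e1, e2, e3, hrecm]
  have hPexp : ∀ m, ∏ k ∈ Finset.Ico N m, (1 - γ k)
      ≤ Real.exp (∑ i ∈ Finset.range N, γ i - ∑ i ∈ Finset.range m, γ i) := by
    intro m
    rcases le_or_gt N m with h | h
    · calc ∏ k ∈ Finset.Ico N m, (1 - γ k) ≤ ∏ k ∈ Finset.Ico N m, Real.exp (-γ k) :=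
          Finset.prod_le_prod (fun k _ => by linarith [hγ1 k])
            (fun k _ => by linarith [Real.add_one_le_exp (-γ k)])
      _ = Real.exp (∑ k ∈ Finset.Ico N m, -γ k) := (Real.exp_sum _ _).symm
      _ = Real.exp (∑ i ∈ Finset.range N, γ i - ∑ i ∈ Finset.range m, γ i) := by
          congr 1
          rw [Finset.sum_neg_distrib, Finset.sum_Ico_eq_sub _ h]
          ring
    · rw [Finset.Ico_eq_empty (by omega)]
      simp only [Finset.prod_empty]
      have hsub : ∑ i ∈ Finset.range m, γ i ≤ ∑ i ∈ Finset.range N, γ i :=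
        Finset.sum_le_sum_of_subset_of_nonneg (Finset.range_subset_range.2 h.le) (fun i _ _ => hγ0 i)
      have := Real.one_le_exp (by linarith : (0:ℝ) ≤ ∑ i ∈ Finset.range N, γ i - ∑ i ∈ Finset.range m, γ i)
      linarith
  have hexp : Tendsto (fun m => Real.exp (∑ i ∈ Finset.range N, γ i - ∑ i ∈ Finset.range m, γ i))
      atTop (nhds 0) := by
    apply Real.tendsto_exp_atBot.comp
    apply tendsto_atBot_add_const_left
    exact tendsto_neg_atTop_atBot.comp hsum
  have hPa : Tendsto (fun m => (∏ k ∈ Finset.Ico N m, (1 - γ k)) * a N) atTop (nhds 0) := by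
    apply squeeze_zero (fun m => mul_nonneg (hP0 m) (ha N))
      (fun m => mul_le_mul_of_nonneg_right (hPexp m) (ha N))
    simpa using hexp.mul_const (a N)
  obtain ⟨M, hM⟩ := eventually_atTop.mp (hPa.eventually_lt_const (by linarith : (0:ℝ) < e/4))
  refine ⟨max N M, fun n hn => ?_⟩
  have hkey := key n (le_trans (le_max_left _ _) hn)
  have hMn := hM n (le_trans (le_max_right _ _) hn)
  have htn := htail n
  rw [Real.dist_eq, sub_zero, abs_of_nonneg (ha n)]
  have := hP0 n
  have := hP1 n
  nlinarith

set_option maxHeartbeats 2000000 in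
/-- Under the regularity conditions (h2) on `{α_n}` and `{β_n}`, the unperturbed sequence
of the algorithm (HPA) satisfies `‖y_{n+1} - y_n‖ → 0`. -/
theorem hpa_asymptotic_regularity_h2
    {H : Type*} [NormedAddCommGroup H] [InnerProductSpace ℝ H] [CompleteSpace H]
    (Q : Set H) (hQne : Q.Nonempty) (hQclosed : IsClosed Q) (hQconvex : Convex ℝ Q)
    (T f F : H → H)
    (hTmaps : ∀ x ∈ Q, T x ∈ Q)
    (hTnonexp : ∀ x ∈ Q, ∀ y ∈ Q, ‖T x - T y‖ ≤ ‖x - y‖)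
    (hfix : ∃ p ∈ Q, T p = p)
    (αf : ℝ) (hαf : 0 ≤ αf)
    (hfLip : ∀ x ∈ Q, ∀ y ∈ Q, ‖f x - f y‖ ≤ αf * ‖x - y‖)
    (κ η : ℝ) (hκ : 0 < κ) (hη : 0 < η)
    (hFLip : ∀ x ∈ Q, ∀ y ∈ Q, ‖F x - F y‖ ≤ κ * ‖x - y‖)
    (hFmono : ∀ x ∈ Q, ∀ y ∈ Q, η * ‖x - y‖ ^ 2 ≤ ⟪F x - F y, x - y⟫)
    (hαη : αf < η)
    (PQ : H → H)
    (hPQ : ∀ x : H, PQ x ∈ Q ∧ ∀ y ∈ Q, ⟪x - PQ x, y - PQ x⟫ ≤ 0)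
    (δ₀ : ℝ) (hδ₀ : δ₀ ∈ Set.Ioo 0 (2 * (η - αf) / κ ^ 2))
    (α β : ℕ → ℝ)
    (hα : ∀ n, α n ∈ Set.Ioc 0 δ₀)
    (hαsum : Tendsto (fun n => ∑ i ∈ Finset.range n, α i) atTop atTop)
    (hαreg : Tendsto (fun n => (α (n + 1) - α n) / α n) atTop (nhds 0)
      ∨ Summable fun n => |α (n + 1) - α n|)
    (hβ : ∀ n, β n ∈ Set.Icc (0 : ℝ) 1)
    (hβlimsup : limsup β atTop < 1)
    (hβreg : Tendsto (fun n => (β (n + 1) - β n) / α n) atTop (nhds 0)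
      ∨ Summable fun n => |β (n + 1) - β n|)
    (y : ℕ → H) (hy0 : y 0 ∈ Q)
    (hyrec : ∀ n, y (n + 1) = β n • y n
      + (1 - β n) • PQ (α n • f (y n) + (T (y n) - α n • F (T (y n))))) :
    Tendsto (fun n => ‖y (n + 1) - y n‖) atTop (nhds 0) := by
  obtain ⟨p, hpQ, hpT⟩ := hfix
  -- projection facts
  have hPQne : ∀ x w : H, ‖PQ x - PQ w‖ ≤ ‖x - w‖ := by
    intro x w
    have h1 := (hPQ x).2 (PQ w) (hPQ w).1
    have h2 := (hPQ w).2 (PQ x) (hPQ x).1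
    have hip : ‖PQ x - PQ w‖^2 ≤ ⟪x - w, PQ x - PQ w⟫ := by
      have e1 : ⟪x - w, PQ x - PQ w⟫ - ‖PQ x - PQ w‖^2
          = -⟪x - PQ x, PQ w - PQ x⟫ - ⟪w - PQ w, PQ x - PQ w⟫ := by
        simp only [← real_inner_self_eq_norm_sq]
        simp only [inner_sub_left, inner_sub_right]
        ring
      linarith
    have hcs := real_inner_le_norm (x - w) (PQ x - PQ w)
    rcases eq_or_lt_of_le (norm_nonneg (PQ x - PQ w)) with h | h
    · rw [← h]; exact norm_nonneg _
    · nlinarith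
  have hPQid : ∀ x ∈ Q, PQ x = x := by
    intro x hx
    have h1 := (hPQ x).2 x hx
    have : ‖x - PQ x‖^2 ≤ 0 := by
      rw [← real_inner_self_eq_norm_sq]; exact h1
    have hz : x - PQ x = 0 := by
      have := sq_nonneg ‖x - PQ x‖
      have hn : ‖x - PQ x‖ = 0 := by nlinarith
      exact norm_eq_zero.mp hn
    have := sub_eq_zero.mp hz
    exact this.symm
  -- singleton case
  by_cases hsing : ∀ x ∈ Q, x = p
  · have hyp : ∀ n, y n = p := by
      intro n
      induction n with
      | zero => exact hsing _ hy0
      | succ n ih =>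
        rw [hyrec n, ih]
        rw [hsing _ (hPQ (α n • f p + (T p - α n • F (T p)))).1]
        rw [← add_smul]
        simp
    have hz : (fun n => ‖y (n+1) - y n‖) = fun _ => (0:ℝ) := by
      funext n; simp [hyp]
    rw [hz]
    exact tendsto_const_nhds
  push_neg at hsing
  obtain ⟨q, hqQ, hqp⟩ := hsing
  have hηκ : η ≤ κ := by
    have hd : 0 < ‖q - p‖ := by
      rw [norm_pos_iff, sub_ne_zero]; exact hqp
    have h1 := hFmono q hqQ p hpQ
    have h2 := real_inner_le_norm (F q - F p) (q - p)
    have h3 := hFLip q hqQ p hpQ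
    nlinarith [mul_le_mul_of_nonneg_right h3 (norm_nonneg (q - p)), mul_pos hd hd, sq_nonneg ‖q - p‖]
  -- constants
  have hκ2 : (0:ℝ) < κ^2 := by positivity
  have hδ0pos : 0 < δ₀ := hδ₀.1
  have hδ0lt : δ₀ * κ^2 < 2*(η - αf) := (lt_div_iff₀ hκ2).mp hδ₀.2
  obtain ⟨c', hc'pos, hAc1, hc'le⟩ : ∃ c' : ℝ, 0 < c' ∧ (∀ A ∈ Set.Ioc (0:ℝ) δ₀, A * c' ≤ 1)
      ∧ (∀ A ∈ Set.Ioc (0:ℝ) δ₀, c' ≤ η - A * κ^2/2 - αf) := by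
    have hminpos : 0 < min (η - αf - δ₀ * κ^2 / 2) (1/δ₀) :=
      lt_min (by linarith) (by positivity)
    refine ⟨min (η - αf - δ₀ * κ^2 / 2) (1/δ₀), hminpos, ?_, ?_⟩
    · intro A hA
      calc A * min (η - αf - δ₀ * κ^2 / 2) (1/δ₀) ≤ δ₀ * (1/δ₀) :=
            mul_le_mul hA.2 (min_le_right _ _) hminpos.le hδ0pos.le
      _ = 1 := by field_simp
    · intro A hA
      have h1 : min (η - αf - δ₀ * κ^2 / 2) (1/δ₀) ≤ η - αf - δ₀ * κ^2 / 2 := min_le_left _ _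
      nlinarith [hA.2, hκ2, hA.1]
  -- half bound
  have hhalf : ∀ A ∈ Set.Ioc (0:ℝ) δ₀, (1:ℝ)/2 ≤ 1 - A * (η - A * κ^2/2) := by
    intro A hA
    have hA0 := hA.1
    have hrad : 0 ≤ 1 - 2*A*η + A^2*κ^2 := by
      nlinarith [sq_nonneg (A*κ^2 - η), mul_nonneg (sub_nonneg.2 hηκ) (by positivity : (0:ℝ) ≤ κ + η)]
    nlinarith
  -- key contraction of I - A F on T-images
  have key1 : ∀ A ∈ Set.Ioc (0:ℝ) δ₀, ∀ u ∈ Q, ∀ v ∈ Q,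
      ‖(u - A • F u) - (v - A • F v)‖ ≤ (1 - A * (η - A * κ^2/2)) * ‖u - v‖ := by
    intro A hA u hu v hv
    have hA0 := hA.1
    have hs := hhalf A hA
    have hre : (u - A • F u) - (v - A • F v) = (u - v) - A • (F u - F v) := by
      rw [smul_sub]; abel
    rw [hre]
    have hexp : ‖(u - v) - A • (F u - F v)‖^2
        = ‖u - v‖^2 - 2*(A*⟪F u - F v, u - v⟫) + A^2*‖F u - F v‖^2 := by
      rw [norm_sub_sq_real, real_inner_smul_right, norm_smul, real_inner_comm,
        Real.norm_eq_abs, mul_pow, sq_abs]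
    have hm := hFmono u hu v hv
    have hl := hFLip u hu v hv
    have hl2 : ‖F u - F v‖^2 ≤ (κ * ‖u - v‖)^2 :=
      pow_le_pow_left₀ (norm_nonneg _) hl 2
    have hsq : ‖(u - v) - A • (F u - F v)‖^2 ≤ ((1 - A * (η - A * κ^2/2)) * ‖u - v‖)^2 := by
      rw [hexp]
      nlinarith [mul_le_mul_of_nonneg_left hm (by positivity : (0:ℝ) ≤ 2*A),
        mul_le_mul_of_nonneg_left hl2 (sq_nonneg A),
        sq_nonneg (A*η - A^2*κ^2/2), sq_nonneg ‖u - v‖,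
        mul_nonneg (mul_nonneg hA0.le hA0.le) (sq_nonneg ‖u-v‖)]
    have hrhs : 0 ≤ (1 - A * (η - A * κ^2/2)) * ‖u - v‖ :=
      mul_nonneg (by linarith) (norm_nonneg _)
    have := Real.sqrt_le_sqrt hsq
    rwa [Real.sqrt_sq (norm_nonneg _), Real.sqrt_sq hrhs] at this
  -- the map z
  set z : ℝ → H → H := fun A x => PQ (A • f x + (T x - A • F (T x))) with hzdef
  have hyrec' : ∀ n, y (n + 1) = β n • y n + (1 - β n) • z (α n) (y n) := hyrec
  have hzQ : ∀ A x, z A x ∈ Q := fun A x => (hPQ _).1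
  -- contraction of z in x
  have keyz : ∀ A ∈ Set.Ioc (0:ℝ) δ₀, ∀ x ∈ Q, ∀ w ∈ Q,
      ‖z A x - z A w‖ ≤ (1 - A * c') * ‖x - w‖ := by
    intro A hA x hx w hw
    have hA0 := hA.1
    have hs := hhalf A hA
    have h1 : ‖z A x - z A w‖ ≤ ‖(A • f x + (T x - A • F (T x))) - (A • f w + (T w - A • F (T w)))‖ :=
      hPQne _ _
    have hdec : (A • f x + (T x - A • F (T x))) - (A • f w + (T w - A • F (T w)))
        = A • (f x - f w) + ((T x - A • F (T x)) - (T w - A • F (T w))) := by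
      rw [smul_sub]; abel
    have h2 : ‖(A • f x + (T x - A • F (T x))) - (A • f w + (T w - A • F (T w)))‖
        ≤ A * (αf * ‖x - w‖) + (1 - A * (η - A * κ^2/2)) * ‖x - w‖ := by
      rw [hdec]
      refine le_trans (norm_add_le _ _) (add_le_add ?_ ?_)
      · rw [norm_smul, Real.norm_eq_abs, abs_of_pos hA0]
        exact mul_le_mul_of_nonneg_left (hfLip x hx w hw) hA0.le
      · refine le_trans (key1 A hA (T x) (hTmaps x hx) (T w) (hTmaps w hw)) ?_
        exact mul_le_mul_of_nonneg_left (hTnonexp x hx w hw) (by linarith)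
    have h3 : A * (αf * ‖x - w‖) + (1 - A * (η - A * κ^2/2)) * ‖x - w‖ ≤ (1 - A * c') * ‖x - w‖ := by
      have hcc := hc'le A hA
      have h4 := mul_le_mul_of_nonneg_left hcc hA0.le
      nlinarith [mul_nonneg (sub_nonneg.2 h4) (norm_nonneg (x - w))]
    linarith
  -- variation of z in A
  have keyzA : ∀ A B : ℝ, ∀ x : H, ‖z A x - z B x‖ ≤ |A - B| * (‖f x‖ + ‖F (T x)‖) := by
    intro A B x
    refine le_trans (hPQne _ _) ?_
    have hdec : (A • f x + (T x - A • F (T x))) - (B • f x + (T x - B • F (T x)))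
        = (A - B) • f x - (A - B) • F (T x) := by
      rw [sub_smul, sub_smul]; abel
    rw [hdec]
    refine le_trans (norm_sub_le _ _) ?_
    rw [norm_smul, norm_smul, Real.norm_eq_abs, mul_add]
  -- distance of z A x to p
  set K : ℝ := ‖f p‖ + ‖F p‖ with hK
  have hK0 : 0 ≤ K := by rw [hK]; positivity
  clear_value K
  have hzp : ∀ A ∈ Set.Ioc (0:ℝ) δ₀, ∀ x ∈ Q, ‖z A x - p‖ ≤ (1 - A * c') * ‖x - p‖ + A * K := by
    intro A hA x hx
    have hA0 := hA.1
    have hs := hhalf A hA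
    have h1 : ‖z A x - p‖ ≤ ‖(A • f x + (T x - A • F (T x))) - p‖ := by
      conv_lhs => rw [show p = PQ p from (hPQid p hpQ).symm]
      exact hPQne _ _
    have hdec : (A • f x + (T x - A • F (T x))) - p
        = A • (f x - f p) + ((T x - A • F (T x)) - (T p - A • F (T p)))
          + (A • f p - A • F (T p)) := by
      rw [hpT, smul_sub]; abel
    have h2 : ‖(A • f x + (T x - A • F (T x))) - p‖
        ≤ A * (αf * ‖x - p‖) + (1 - A * (η - A * κ^2/2)) * ‖x - p‖ + A * K := by
      rw [hdec]
      refine le_trans (norm_add_le _ _) (add_le_add (le_trans (norm_add_le _ _) (add_le_add ?_ ?_)) ?_)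
      · rw [norm_smul, Real.norm_eq_abs, abs_of_pos hA0]
        exact mul_le_mul_of_nonneg_left (hfLip x hx p hpQ) hA0.le
      · refine le_trans (key1 A hA (T x) (hTmaps x hx) (T p) (hTmaps p hpQ)) ?_
        exact mul_le_mul_of_nonneg_left (hTnonexp x hx p hpQ) (by linarith)
      · calc ‖A • f p - A • F (T p)‖ ≤ ‖A • f p‖ + ‖A • F (T p)‖ := norm_sub_le _ _
        _ = A * K := by
            rw [hpT, norm_smul, norm_smul, Real.norm_eq_abs, abs_of_pos hA0, hK]
            ring
    have h3 : A * (αf * ‖x - p‖) + (1 - A * (η - A * κ^2/2)) * ‖x - p‖ ≤ (1 - A * c') * ‖x - p‖ := by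
      have hcc := hc'le A hA
      have h4 := mul_le_mul_of_nonneg_left hcc hA0.le
      nlinarith [mul_nonneg (sub_nonneg.2 h4) (norm_nonneg (x - p))]
    linarith
  -- boundedness
  set M : ℝ := max ‖y 0 - p‖ (K / c') with hM
  have hM0 : 0 ≤ M := le_trans (norm_nonneg _) (le_max_left _ _)
  have hKM : K ≤ c' * M := by
    have : K / c' ≤ M := le_max_right _ _
    calc K = c' * (K / c') := by field_simp
    _ ≤ c' * M := mul_le_mul_of_nonneg_left this hc'pos.le
  clear_value M
  have hbound : ∀ n, y n ∈ Q ∧ ‖y n - p‖ ≤ M := by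
    intro n
    induction n with
    | zero => exact ⟨hy0, by rw [hM]; exact le_max_left _ _⟩
    | succ n ih =>
      obtain ⟨hyQ, hyM⟩ := ih
      have hβn := hβ n
      have hαn := hα n
      have hzmem := hzQ (α n) (y n)
      constructor
      · rw [hyrec' n]
        exact hQconvex hyQ hzmem (hβn.1) (by linarith [hβn.2]) (by ring)
      · have hzb : ‖z (α n) (y n) - p‖ ≤ (1 - α n * c') * ‖y n - p‖ + α n * K :=
          hzp (α n) hαn (y n) hyQ
        have hcoef : 0 ≤ 1 - α n * c' := by linarith [hAc1 (α n) hαn]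
        have hzM : ‖z (α n) (y n) - p‖ ≤ M := by
          have h1 : (1 - α n * c') * ‖y n - p‖ ≤ (1 - α n * c') * M :=
            mul_le_mul_of_nonneg_left hyM hcoef
          have h2 : α n * K ≤ α n * (c' * M) := mul_le_mul_of_nonneg_left hKM hαn.1.le
          nlinarith
        have hid : y (n+1) - p = β n • (y n - p) + (1 - β n) • (z (α n) (y n) - p) := by
          rw [hyrec' n]; module
        rw [hid]
        refine le_trans (norm_add_le _ _) ?_
        rw [norm_smul, norm_smul, Real.norm_eq_abs, Real.norm_eq_abs,
          abs_of_nonneg hβn.1, abs_of_nonneg (by linarith [hβn.2] : (0:ℝ) ≤ 1 - β n)]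
        nlinarith [hβn.1, hβn.2]
  -- uniform bounds M₂ M₃
  set M₂ : ℝ := (αf * M + ‖f p‖) + (κ * M + ‖F p‖) with hM₂
  have hM₂0 : 0 ≤ M₂ := by rw [hM₂]; positivity
  clear_value M₂
  have hM₂b : ∀ n, ‖f (y n)‖ + ‖F (T (y n))‖ ≤ M₂ := by
    intro n
    rw [hM₂]
    obtain ⟨hyQ, hyM⟩ := hbound n
    have h1 : ‖f (y n)‖ ≤ αf * M + ‖f p‖ := by
      have := hfLip (y n) hyQ p hpQ
      have h := norm_sub_norm_le (f (y n)) (f p)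
      have : ‖f (y n)‖ - ‖f p‖ ≤ αf * ‖y n - p‖ := le_trans h this
      nlinarith [mul_le_mul_of_nonneg_left hyM hαf]
    have h2 : ‖F (T (y n))‖ ≤ κ * M + ‖F p‖ := by
      have hT := hFLip (T (y n)) (hTmaps (y n) hyQ) (T p) (hTmaps p hpQ)
      rw [hpT] at hT
      have h := norm_sub_norm_le (F (T (y n))) (F p)
      have h3 : ‖F (T (y n))‖ - ‖F p‖ ≤ κ * ‖T (y n) - p‖ := le_trans h hT
      have h4 : ‖T (y n) - p‖ ≤ ‖y n - p‖ := by
        have := hTnonexp (y n) hyQ p hpQ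
        rwa [hpT] at this
      nlinarith [mul_le_mul_of_nonneg_left (le_trans h4 hyM) hκ.le]
    linarith
  set M₃ : ℝ := 2 * M + δ₀ * K with hM₃
  have hM₃0 : 0 ≤ M₃ := by rw [hM₃]; positivity
  clear_value M₃
  have hM₃b : ∀ n, ‖y n - z (α n) (y n)‖ ≤ M₃ := by
    intro n
    obtain ⟨hyQ, hyM⟩ := hbound n
    have hαn := hα n
    have h1 : ‖z (α n) (y n) - p‖ ≤ (1 - α n * c') * ‖y n - p‖ + α n * K :=
      hzp (α n) hαn (y n) hyQ
    have hcoef : 0 ≤ 1 - α n * c' := by linarith [hAc1 (α n) hαn]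
    have h2 : ‖y n - z (α n) (y n)‖ ≤ ‖y n - p‖ + ‖z (α n) (y n) - p‖ := by
      have := norm_sub_le (y n - p) (z (α n) (y n) - p)
      simpa using this
    have h3 : α n * K ≤ δ₀ * K := mul_le_mul_of_nonneg_right hαn.2 hK0
    have h4 : (1 - α n * c') * ‖y n - p‖ ≤ M := by
      nlinarith [norm_nonneg (y n - p), mul_pos hαn.1 hc'pos]
    rw [hM₃]
    linarith
  -- the recursion for w
  set w : ℕ → ℝ := fun n => ‖y (n+1) - y n‖ with hw
  have hw0 : ∀ n, 0 ≤ w n := fun n => by rw [hw]; exact norm_nonneg _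
  clear_value w
  set γ : ℕ → ℝ := fun n => (1 - β (n+1)) * (α n * c') with hγ
  have hγ0 : ∀ n, 0 ≤ γ n := fun n =>
    mul_nonneg (by linarith [(hβ (n+1)).2]) (mul_pos (hα n).1 hc'pos).le
  have hγ1 : ∀ n, γ n ≤ 1 := by
    intro n
    have hγn : γ n = (1 - β (n+1)) * (α n * c') := by rw [hγ]
    rw [hγn]
    have h1 := hAc1 (α n) (hα n)
    have h2 := (hβ (n+1)).1
    have h3 := (hβ (n+1)).2
    have := mul_pos (hα n).1 hc'pos
    nlinarith
  clear_value γ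
  have hrecw : ∀ n, w (n+1) ≤ (1 - γ n) * w n + |α (n+1) - α n| * M₂ + |β (n+1) - β n| * M₃ := by
    intro n
    obtain ⟨hyQ, _⟩ := hbound n
    obtain ⟨hyQ1, _⟩ := hbound (n+1)
    -- identity
    have hid : y (n+2) - y (n+1)
        = β (n+1) • (y (n+1) - y n) + (1 - β (n+1)) • (z (α (n+1)) (y (n+1)) - z (α n) (y n))
          + (β (n+1) - β n) • (y n - z (α n) (y n)) := by
      have h1 : y (n+1) = β n • y n + (1 - β n) • z (α n) (y n) := hyrec' n
      have h2 : y (n+2) = β (n+1) • y (n+1) + (1 - β (n+1)) • z (α (n+1)) (y (n+1)) := hyrec' (n+1)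
      rw [h2]
      have h3 : (1 - β n) • z (α n) (y n) + β n • y n - y (n+1) = 0 := by
        rw [h1]; abel
      have h4 : β (n+1) • y (n+1) + (1 - β (n+1)) • z (α (n+1)) (y (n+1)) - y (n+1)
          = β (n+1) • (y (n+1) - y n) + (1 - β (n+1)) • (z (α (n+1)) (y (n+1)) - z (α n) (y n))
            + (β (n+1) - β n) • (y n - z (α n) (y n))
            + ((1 - β n) • z (α n) (y n) + β n • y n - y (n+1)) := by
        module
      rw [h4, h3, add_zero]
    have hzz : ‖z (α (n+1)) (y (n+1)) - z (α n) (y n)‖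
        ≤ (1 - α n * c') * ‖y (n+1) - y n‖ + |α (n+1) - α n| * M₂ := by
      have t1 : ‖z (α (n+1)) (y (n+1)) - z (α n) (y n)‖
          ≤ ‖z (α n) (y (n+1)) - z (α n) (y n)‖ + ‖z (α (n+1)) (y (n+1)) - z (α n) (y (n+1))‖ := by
        have := norm_add_le (z (α n) (y (n+1)) - z (α n) (y n))
          (z (α (n+1)) (y (n+1)) - z (α n) (y (n+1)))
        have he : (z (α n) (y (n+1)) - z (α n) (y n)) + (z (α (n+1)) (y (n+1)) - z (α n) (y (n+1)))
            = z (α (n+1)) (y (n+1)) - z (α n) (y n) := by abel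
        rw [he] at this
        linarith
      have t2 : ‖z (α n) (y (n+1)) - z (α n) (y n)‖ ≤ (1 - α n * c') * ‖y (n+1) - y n‖ :=
        keyz (α n) (hα n) (y (n+1)) hyQ1 (y n) hyQ
      have t3 : ‖z (α (n+1)) (y (n+1)) - z (α n) (y (n+1))‖
          ≤ |α (n+1) - α n| * (‖f (y (n+1))‖ + ‖F (T (y (n+1)))‖) := keyzA _ _ _
      have t4 := hM₂b (n+1)
      have t5 : |α (n+1) - α n| * (‖f (y (n+1))‖ + ‖F (T (y (n+1)))‖) ≤ |α (n+1) - α n| * M₂ :=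
        mul_le_mul_of_nonneg_left t4 (abs_nonneg _)
      linarith
    have hβn := hβ (n+1)
    have hcoef : 0 ≤ 1 - α n * c' := by linarith [hAc1 (α n) (hα n)]
    calc w (n+1) = ‖y (n+2) - y (n+1)‖ := by rw [hw]
    _ = ‖β (n+1) • (y (n+1) - y n)
        + (1 - β (n+1)) • (z (α (n+1)) (y (n+1)) - z (α n) (y n))
        + (β (n+1) - β n) • (y n - z (α n) (y n))‖ := by rw [hid]
    _ ≤ ‖β (n+1) • (y (n+1) - y n)‖
        + ‖(1 - β (n+1)) • (z (α (n+1)) (y (n+1)) - z (α n) (y n))‖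
        + ‖(β (n+1) - β n) • (y n - z (α n) (y n))‖ := by
      have t1 := norm_add_le (β (n+1) • (y (n+1) - y n)
        + (1 - β (n+1)) • (z (α (n+1)) (y (n+1)) - z (α n) (y n)))
        ((β (n+1) - β n) • (y n - z (α n) (y n)))
      have t2 := norm_add_le (β (n+1) • (y (n+1) - y n))
        ((1 - β (n+1)) • (z (α (n+1)) (y (n+1)) - z (α n) (y n)))
      linarith
    _ ≤ β (n+1) * ‖y (n+1) - y n‖
        + (1 - β (n+1)) * ((1 - α n * c') * ‖y (n+1) - y n‖ + |α (n+1) - α n| * M₂)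
        + |β (n+1) - β n| * M₃ := by
      rw [norm_smul, norm_smul, norm_smul, Real.norm_eq_abs, Real.norm_eq_abs, Real.norm_eq_abs,
        abs_of_nonneg hβn.1, abs_of_nonneg (by linarith [hβn.2] : (0:ℝ) ≤ 1 - β (n+1))]
      refine add_le_add (add_le_add le_rfl ?_) ?_
      · exact mul_le_mul_of_nonneg_left hzz (by linarith [hβn.2])
      · exact mul_le_mul_of_nonneg_left (hM₃b n) (abs_nonneg _)
    _ = β (n+1) * w n + (1 - β (n+1)) * ((1 - α n * c') * w n + |α (n+1) - α n| * M₂)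
        + |β (n+1) - β n| * M₃ := by rw [hw]
    _ ≤ (1 - γ n) * w n + |α (n+1) - α n| * M₂ + |β (n+1) - β n| * M₃ := by
      have hwn : 0 ≤ w n := hw0 n
      have hγn : γ n = (1 - β (n+1)) * (α n * c') := by rw [hγ]
      have habs : 0 ≤ |α (n+1) - α n| * M₂ := mul_nonneg (abs_nonneg _) hM₂0
      nlinarith [hβn.1, hβn.2]
  -- limsup β bound
  obtain ⟨r, hr1, hr2⟩ : ∃ r, limsup β atTop < r ∧ r < 1 :=
    ⟨(limsup β atTop + 1)/2, by linarith, by linarith⟩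
  have hevβ : ∀ᶠ n in atTop, β n < r :=
    eventually_lt_of_limsup_lt hr1 (isBoundedUnder_of ⟨1, fun n => (hβ n).2⟩)
  obtain ⟨N₀, hN₀⟩ := eventually_atTop.mp hevβ
  have hbc : 0 < (1 - r) * c' := mul_pos (by linarith) hc'pos
  have hγlb : ∀ n ≥ N₀, (1 - r) * c' * α n ≤ γ n := by
    intro n hn
    have hβn1 : β (n+1) < r := hN₀ (n+1) (by omega)
    have hαn := (hα n).1
    have hγn : γ n = (1 - β (n+1)) * (α n * c') := by rw [hγ]
    rw [hγn]
    nlinarith [mul_pos hαn hc'pos]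
  -- non-summability of γ gives divergence of partial sums
  have hγsum : Tendsto (fun n => ∑ i ∈ Finset.range n, γ i) atTop atTop := by
    rw [← not_summable_iff_tendsto_nat_atTop_of_nonneg hγ0]
    intro hS
    have hSα : Summable α := by
      rw [← summable_nat_add_iff N₀]
      apply Summable.of_nonneg_of_le (fun n => (hα (n + N₀)).1.le)
        (fun n => ?_) (((summable_nat_add_iff N₀).2 hS).mul_left (((1 - r) * c')⁻¹))
      have h1 := hγlb (n + N₀) (by omega)
      rw [← div_eq_inv_mul, le_div_iff₀ hbc, mul_comm]
      exact h1
    exact not_tendsto_atTop_of_tendsto_nhds hSα.hasSum.tendsto_sum_nat hαsum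
  -- build δ ε for a generic coefficient sequence
  have mk : ∀ (g : ℕ → ℝ) (Mg : ℝ), 0 ≤ Mg →
      (Tendsto (fun n => (g (n + 1) - g n) / α n) atTop (nhds 0)
        ∨ Summable fun n => |g (n + 1) - g n|) →
      ∃ d ε : ℕ → ℝ, Tendsto d atTop (nhds 0) ∧ (∀ n, 0 ≤ ε n) ∧ Summable ε ∧
        ∀ n ≥ N₀, |g (n + 1) - g n| * Mg ≤ γ n * d n + ε n := by
    intro g Mg hMg hreg
    rcases hreg with hreg | hreg
    · refine ⟨fun n => |g (n + 1) - g n| * Mg / γ n, fun _ => 0, ?_, fun _ => le_rfl,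
        summable_zero, ?_⟩
      · apply squeeze_zero'
          (Eventually.of_forall fun n => div_nonneg (mul_nonneg (abs_nonneg _) hMg) (hγ0 n))
          (f := fun n => |g (n + 1) - g n| * Mg / γ n)
          (g := fun n => Mg / ((1 - r) * c') * (|g (n + 1) - g n| / α n))
        · rw [eventually_atTop]
          refine ⟨N₀, fun n hn => ?_⟩
          have hγn := hγlb n hn
          have hαn := (hα n).1
          have hpos : 0 < (1 - r) * c' * α n := mul_pos hbc (hα n).1
          calc |g (n + 1) - g n| * Mg / γ n ≤ |g (n + 1) - g n| * Mg / ((1 - r) * c' * α n) :=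
              div_le_div_of_nonneg_left (mul_nonneg (abs_nonneg _) hMg) hpos hγn
          _ = Mg / ((1 - r) * c') * (|g (n + 1) - g n| / α n) := by
              field_simp
        · have h1 : Tendsto (fun n => |g (n + 1) - g n| / α n) atTop (nhds 0) := by
            have h2 : Tendsto (fun n => |(g (n + 1) - g n) / α n|) atTop (nhds 0) := by
              simpa using hreg.abs
            apply h2.congr
            intro n
            rw [abs_div, abs_of_pos (hα n).1]
          simpa using h1.const_mul (Mg / ((1 - r) * c'))
      · intro n hn
        have hγpos : 0 < γ n := lt_of_lt_of_le (mul_pos hbc (hα n).1) (hγlb n hn)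
        rw [mul_div_cancel₀ _ (ne_of_gt hγpos)]
        simp
    · refine ⟨fun _ => 0, fun n => |g (n + 1) - g n| * Mg, tendsto_const_nhds,
        fun n => mul_nonneg (abs_nonneg _) hMg, hreg.mul_right Mg, fun n hn => ?_⟩
      simp
  obtain ⟨d₁, ε₁, hd₁, hε₁0, hε₁, h₁⟩ := mk α M₂ hM₂0 hαreg
  obtain ⟨d₂, ε₂, hd₂, hε₂0, hε₂, h₂⟩ := mk β M₃ hM₃0 hβreg
  have := xu_lemma w γ (fun n => d₁ n + d₂ n) (fun n => ε₁ n + ε₂ n)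
    hw0 hγ0 hγ1 hγsum
    (by simpa using hd₁.add hd₂)
    (fun n => add_nonneg (hε₁0 n) (hε₂0 n)) (hε₁.add hε₂)
    (by
      rw [eventually_atTop]
      refine ⟨N₀, fun n hn => ?_⟩
      have e1 := h₁ n hn
      have e2 := h₂ n hn
      have e3 := hrecw n
      show w (n + 1) ≤ (1 - γ n) * w n + γ n * (d₁ n + d₂ n) + (ε₁ n + ε₂ n)
      have : γ n * (d₁ n + d₂ n) = γ n * d₁ n + γ n * d₂ n := by ring
      linarith [hrecw n])
  exact this
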